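/- arXiv:2510.16314 — 3 statements merged into one kernel-verified Lean document; each statement's English description precedes it below -/
import Mathlib

section
/- Suppose p is a nonalgebraic rational type over k that is nonorthogonal to the fixed field. Then p is minimal if and only if dim(p) = 1. -/
universe u

open scoped Cardinal

/-- A difference field extension of `(k, σ)`: a field `L` together with a field
automorphism `σ_L` and an embedding of `k` into `L` intertwining `σ` and `σ_L`. -/
structure DiffExt (k : Type u) [Field k] (σ : k ≃+* k) where
  carrier : Type u
  [field : Field carrier]
  sigma : carrier ≃+* carrier
  emb : k →+* carrier
  compat : ∀ x : k, sigma (emb x) = emb (σ x)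

attribute [instance] DiffExt.field

namespace DiffExt

variable {k : Type u} [Field k] {σ : k ≃+* k}

/-- The subfield of `L` generated by (the image of) `k` together with a set `S`. -/
def adj (E : DiffExt k σ) (S : Set E.carrier) : Subfield E.carrier :=
  Subfield.closure (Set.range E.emb ∪ S)

end DiffExt

/-- `x` is algebraic over the subfield `F`. -/
def IsAlgOver {L : Type u} [Field L] (F : Subfield L) (x : L) : Prop :=
  ∃ q : Polynomial F, q ≠ 0 ∧ Polynomial.eval₂ F.subtype x q = 0

/-- The transcendence degree over `F` of the subfield generated by `F` and `S`:
the supremum of the cardinalities of subsets of that subfield which are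
algebraically independent over `F`. -/
noncomputable def trdegOver {L : Type u} [Field L] (F : Subfield L) (S : Set L) : Cardinal.{u} :=
  ⨆ t : {t : Set L // t ⊆ (Subfield.closure ((F : Set L) ∪ S) : Set L) ∧
      AlgebraicIndependent F ((↑) : t → L)}, Cardinal.mk t

/-- The algebraic closure of a subfield `F` inside the ambient field `L`. -/
def algClosureIn {L : Type u} [Field L] (F : Subfield L) : Subfield L :=
  Subfield.closure {x | IsAlgOver F x}

/-- A rational type over `k`: a difference field extension `(L₀,σ₀)` together with a
tuple `a₀` such that `σ₀(a₀ⱼ) ∈ k(a₀)` for every `j`. -/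
structure RatType (k : Type u) [Field k] (σ : k ≃+* k) where
  N : ℕ
  ext : DiffExt k σ
  a : Fin N → ext.carrier
  rat : ∀ j, ext.sigma (a j) ∈ ext.adj (Set.range a)

namespace RatType

variable {k : Type u} [Field k] {σ : k ≃+* k}

/-- The field `k(a₀)` of the rational type. -/
def fld (p : RatType k σ) : Subfield p.ext.carrier := p.ext.adj (Set.range p.a)

/-- `b` is a realisation of `p` in the difference field extension `E`: there is a field
isomorphism from `k(a₀)` onto `k(b)` fixing `k`, sending `a₀` to `b` and intertwining
`σ₀` with `σ_L` (given here as a field embedding `ψ : k(a₀) → L`; its image is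
automatically `k(b)`). -/
def IsRealisation (p : RatType k σ) (E : DiffExt k σ) (b : Fin p.N → E.carrier) : Prop :=
  ∃ ψ : p.fld →+* E.carrier,
    (∀ x : k, ψ ⟨p.ext.emb x, Subfield.subset_closure (Set.mem_union_left _ ⟨x, rfl⟩)⟩
        = E.emb x) ∧
    (∀ j, ψ ⟨p.a j, Subfield.subset_closure (Set.mem_union_right _ ⟨j, rfl⟩)⟩ = b j) ∧
    (∀ (u : p.fld) (hu : p.ext.sigma ↑u ∈ p.fld), ψ ⟨p.ext.sigma ↑u, hu⟩ = E.sigma (ψ u))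

/-- The dimension of `p`: the transcendence degree of `k(a₀)` over `k`. -/
noncomputable def dim (p : RatType k σ) : Cardinal.{u} :=
  trdegOver p.ext.emb.fieldRange (Set.range p.a)

/-- `p` is minimal. -/
def Minimal (p : RatType k σ) : Prop :=
  1 ≤ p.dim ∧
  ∀ (E : DiffExt k σ) (K : Subfield E.carrier),
    Set.range E.emb ⊆ (K : Set E.carrier) →
    Subfield.map E.sigma.toRingHom K = K →
    ∀ b : Fin p.N → E.carrier, p.IsRealisation E b →
      (∀ j, IsAlgOver K (b j)) ∨ trdegOver K (Set.range b) = p.dim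

/-- A witness configuration for the degree of nonminimality at `d`. -/
def NmWitness (p : RatType k σ) (d : ℕ) : Prop :=
  ∃ (E : DiffExt k σ) (a : Fin d → Fin p.N → E.carrier) (b : Fin p.N → E.carrier),
    (∀ i, p.IsRealisation E (a i)) ∧ p.IsRealisation E b ∧
    1 ≤ trdegOver (E.adj (⋃ i, Set.range (a i))) (Set.range b) ∧
    trdegOver (E.adj (⋃ i, Set.range (a i))) (Set.range b) < p.dim

/-- The degree of nonminimality of `p`. -/
noncomputable def nmdeg (p : RatType k σ) : ℕ :=
  letI := Classical.propDecidable (p.Minimal ∨ p.dim = 0)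
  if p.Minimal ∨ p.dim = 0 then 0 else sInf {d : ℕ | 1 ≤ d ∧ p.NmWitness d}

end RatType

/-- Two tuples are σ-disjoint if neither is a transform of the other by an
integer power of `σ_L`. -/
def SigmaDisjoint {k : Type u} [Field k] {σ : k ≃+* k} (E : DiffExt k σ) {N : ℕ}
    (b b' : Fin N → E.carrier) : Prop :=
  ∀ r : ℤ, b ≠ fun j => (E.sigma ^ r) (b' j)

namespace RatType

variable {k : Type u} [Field k] {σ : k ≃+* k}

/-- `p` is `m`-disintegrated. -/
def Disintegrated (p : RatType k σ) (m : ℕ) : Prop :=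
  ∀ (E : DiffExt k σ) (b : Fin m → Fin p.N → E.carrier),
    (∀ i, p.IsRealisation E (b i)) →
    (∀ i i', i ≠ i' → SigmaDisjoint E (b i) (b i')) →
    trdegOver E.emb.fieldRange (⋃ i, Set.range (b i)) = (m : Cardinal) * p.dim

/-- `p` is totally disintegrated. -/
def TotallyDisintegrated (p : RatType k σ) : Prop :=
  ∀ m : ℕ, 1 ≤ m → p.Disintegrated m

/-- `p` is one-based. -/
def OneBased (p : RatType k σ) : Prop :=
  ∀ (E : DiffExt k σ), IsAlgClosed E.carrier →
    ∀ (r s : ℕ) (a : Fin r → Fin p.N → E.carrier) (b : Fin s → Fin p.N → E.carrier),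
      (∀ i, p.IsRealisation E (a i)) → (∀ i, p.IsRealisation E (b i)) →
      trdegOver
        (Subfield.closure
          (((algClosureIn (E.adj (⋃ i, Set.range (a i))) ⊓
             algClosureIn (E.adj (⋃ i, Set.range (b i)))) : Subfield E.carrier) ∪
            ⋃ i, Set.range (b i)))
        (⋃ i, Set.range (a i))
      = trdegOver
          ((algClosureIn (E.adj (⋃ i, Set.range (a i))) ⊓
            algClosureIn (E.adj (⋃ i, Set.range (b i)))) : Subfield E.carrier)
          (⋃ i, Set.range (a i))

/-- `p` is qf-internal to the fixed field. -/
def QfInternal (p : RatType k σ) : Prop :=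
  ∃ (E : DiffExt k σ) (b : Fin p.N → E.carrier) (K : Subfield E.carrier),
    p.IsRealisation E b ∧
    Set.range E.emb ⊆ (K : Set E.carrier) ∧
    Subfield.map E.sigma.toRingHom K = K ∧
    trdegOver K (Set.range b) = p.dim ∧
    ∃ (M : ℕ) (c : Fin M → E.carrier),
      (∀ i, E.sigma (c i) = c i) ∧
      ∀ j, b j ∈ Subfield.closure ((K : Set E.carrier) ∪ Set.range c)

/-- `p` satisfies exchange. -/
def Exchange (p : RatType k σ) : Prop :=
  ∀ (E : DiffExt k σ) (a : Fin p.N → E.carrier), p.IsRealisation E a →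
    ∀ (M : ℕ) (b : Fin M → E.carrier),
      (∀ j, IsAlgOver (E.adj (Set.range a)) (b j)) →
      (∀ j, E.sigma (b j) ∈ E.adj (Set.range b)) →
      (¬ ∀ j, b j ∈ Set.range E.emb) →
      ∀ j, IsAlgOver (E.adj (Set.range b)) (a j)

/-- `p` is nonorthogonal to the fixed field. -/
def NonorthFixed (p : RatType k σ) : Prop :=
  ∃ (E : DiffExt k σ) (K : Subfield E.carrier) (a : Fin p.N → E.carrier),
    Set.range E.emb ⊆ (K : Set E.carrier) ∧
    Subfield.map E.sigma.toRingHom K = K ∧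
    p.IsRealisation E a ∧
    trdegOver K (Set.range a) = p.dim ∧
    ∃ (M : ℕ) (c : Fin M → E.carrier),
      (∀ i, E.sigma (c i) = c i) ∧
      trdegOver (Subfield.closure ((K : Set E.carrier) ∪ Set.range c)) (Set.range a) < p.dim

end RatType


/-!
The transcendence degree `trdegOver F S` is the rank of `S` in the algebraic matroid of `L`
over `F`.

If `dim p = 1`: a subfamily of a realisation `b` that is algebraically independent over a
difference field `K ⊇ k` pulls back along the realisation to a subfamily of `a₀` independent
over `k`, so `b` has transcendence degree at most `1` over `K`, hence is either algebraic over
`K` or of degree `1 = dim p`.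

Conversely, adjoin the fixed elements `c₁, …, c_M` witnessing nonorthogonality to `K` one at a
time. Each intermediate field is again a difference field, so by minimality `a` either keeps
degree `dim p` over it or becomes algebraic over it. At the step where the degree drops, `a` has
degree `dim p` over some `K'` and is algebraic over `K'(cᵢ)`, which forces `dim p ≤ 1`.
-/

open AlgebraicIndependent (matroid matroid_closure_eq matroid_indep_iff)

section TranscendenceDegree

variable {L : Type u} [Field L]

theorem Subfield.closure_union_eq_adjoin_toSubfield (F : Subfield L) (S : Set L) :
    Subfield.closure (F ∪ S) = (IntermediateField.adjoin F S).toSubfield := by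
  rw [IntermediateField.adjoin_toSubfield]
  congr
  exact Subtype.range_coe.symm

theorem isAlgOver_closure_union_iff_mem_matroid_closure (F : Subfield L) (T : Set L) (x : L) :
    IsAlgOver (Subfield.closure (F ∪ T)) x ↔ x ∈ (matroid F L).closure T := by
  rw [matroid_closure_eq, Subfield.closure_union_eq_adjoin_toSubfield]
  exact IntermediateField.isAlgebraic_adjoin_iff

theorem closure_union_subset_matroid_closure (F : Subfield L) (S : Set L) :
    (Subfield.closure (F ∪ S) : Set L) ⊆ (matroid F L).closure S := by
  intro x hx
  rw [← isAlgOver_closure_union_iff_mem_matroid_closure]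
  exact isAlgebraic_algebraMap (⟨x, hx⟩ : Subfield.closure (F ∪ S))

theorem trdegOver_eq_cRk (F : Subfield L) (S : Set L) :
    trdegOver F S = (matroid F L).cRk S := by
  set M := matroid F L
  refine le_antisymm (ciSup_le' fun ⟨t, htS, ht⟩ ↦ ?_) ?_
  · rw [← M.cRk_closure]
    exact Matroid.Indep.cardinalMk_le_cRk_of_subset (matroid_indep_iff.2 ht)
      (htS.trans (closure_union_subset_matroid_closure F S))
  · obtain ⟨I, hI⟩ := M.exists_isBasis' S
    rw [← hI.cardinalMk_eq_cRk, trdegOver]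
    exact le_ciSup_of_le Cardinal.bddAbove_of_small
      ⟨I, hI.subset.trans (Subfield.subset_closure.trans' Set.subset_union_right), hI.indep⟩ le_rfl

theorem trdegOver_le_of_isAlgOver {F : Subfield L} {S T : Set L}
    (h : ∀ x ∈ S, IsAlgOver (Subfield.closure (F ∪ T)) x) : trdegOver F S ≤ #T := by
  set M := matroid F L
  rw [trdegOver_eq_cRk]
  calc M.cRk S ≤ M.cRk (M.closure T) :=
        M.cRk_mono fun x hx ↦ (isAlgOver_closure_union_iff_mem_matroid_closure F T x).1 (h x hx)
    _ = M.cRk T := M.cRk_closure T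
    _ ≤ #T := M.cRk_le_cardinalMk T

theorem one_le_trdegOver {F : Subfield L} {S : Set L} {x : L} (hxS : x ∈ S)
    (hx : ¬ IsAlgOver F x) : 1 ≤ trdegOver F S := by
  rw [trdegOver_eq_cRk, ← Cardinal.mk_singleton x]
  refine Matroid.Indep.cardinalMk_le_cRk_of_subset ?_ (Set.singleton_subset_iff.2 hxS)
  rw [matroid_indep_iff, AlgebraicIndepOn, algebraicIndependent_unique_type_iff]
  exact hx

theorem Subfield.closure_closure_union (A B : Set L) :
    Subfield.closure (Subfield.closure A ∪ B) = Subfield.closure (A ∪ B) := by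
  rw [Subfield.closure_union, Subfield.closure_union, Subfield.closure_eq]

theorem Subfield.map_closure_union_eq_self {f : L →+* L} {K : Subfield L} {T : Set L}
    (hK : K.map f = K) (hT : ∀ c ∈ T, f c = c) :
    (Subfield.closure (K ∪ T)).map f = Subfield.closure (K ∪ T) := by
  rw [f.map_field_closure, Set.image_union, ← Subfield.coe_map, hK, Set.image_congr hT,
    Set.image_id']

end TranscendenceDegree

namespace RatType

variable {k : Type u} [Field k] {σ : k ≃+* k} {p : RatType k σ}

theorem emb_mem_fld (x : k) : p.ext.emb x ∈ p.fld :=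
  Subfield.subset_closure (Or.inl ⟨x, rfl⟩)

theorem a_mem_fld (j : Fin p.N) : p.a j ∈ p.fld :=
  Subfield.subset_closure (Or.inr ⟨j, rfl⟩)

theorem IsRealisation.algebraicIndependent_comp {E : DiffExt k σ} {b : Fin p.N → E.carrier}
    (hb : p.IsRealisation E b) {K : Subfield E.carrier} (hK : Set.range E.emb ⊆ K)
    {ι : Type*} (f : ι → Fin p.N) (h : AlgebraicIndependent K (b ∘ f)) :
    AlgebraicIndependent p.ext.emb.fieldRange (p.a ∘ f) := by
  obtain ⟨ψ, hψk, hψa, -⟩ := hb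
  set e := p.ext.emb.rangeRestrictFieldEquiv
  let μ : p.ext.emb.fieldRange →+* K :=
    (E.emb.comp e.symm.toRingHom).codRestrict K fun _ ↦ hK ⟨_, rfl⟩
  let ι₀ : p.ext.emb.fieldRange →+* p.fld :=
    p.ext.emb.fieldRange.subtype.codRestrict p.fld fun u ↦ by
      obtain ⟨y, hy⟩ := RingHom.mem_fieldRange.1 u.2
      rw [Subfield.coe_subtype, ← hy]
      exact emb_mem_fld y
  have hψι₀ : ψ.comp ι₀ = K.subtype.comp μ := by
    ext u
    have hu : ι₀ u = ⟨p.ext.emb (e.symm u), emb_mem_fld _⟩ :=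
      Subtype.ext (p.ext.emb.rangeRestrictFieldEquiv_apply_symm_apply u).symm
    simp only [RingHom.comp_apply, hu, hψk]
    rfl
  -- A relation `P` of `a₀ ∘ f` over `k` holds in `k(a₀)`; `ψ` carries it to the relation
  -- `P.map μ` of `b ∘ f` over `K`.
  let x : ι → p.fld := fun i ↦ ⟨p.a (f i), a_mem_fld _⟩
  rw [algebraicIndependent_iff] at h ⊢
  intro P hP
  have hw : MvPolynomial.eval₂ ι₀ x P = 0 := by
    apply Subtype.coe_injective
    exact (MvPolynomial.eval₂_comp_left p.fld.subtype ι₀ x P).trans hP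
  refine MvPolynomial.map_injective μ μ.injective ((h _ ?_).trans (map_zero _).symm)
  rw [MvPolynomial.aeval_def, MvPolynomial.eval₂_map]
  have := MvPolynomial.eval₂_comp_left ψ ι₀ x P
  rw [hw, map_zero, hψι₀, show ⇑ψ ∘ x = b ∘ f from funext fun i ↦ hψa (f i)] at this
  exact this.symm

theorem IsRealisation.trdegOver_le_dim {E : DiffExt k σ} {b : Fin p.N → E.carrier}
    (hb : p.IsRealisation E b) {K : Subfield E.carrier} (hK : Set.range E.emb ⊆ K) :
    trdegOver K (Set.range b) ≤ p.dim := by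
  obtain ⟨I, hI⟩ := (matroid K E.carrier).exists_isBasis' (Set.range b)
  choose g hg using fun i : I ↦ hI.subset i.2
  have hag := hb.algebraicIndependent_comp hK g (by
    rw [show b ∘ g = (↑) from funext hg]
    exact hI.indep)
  rw [trdegOver_eq_cRk, ← hI.cardinalMk_eq_cRk, dim, trdegOver_eq_cRk,
    ← Cardinal.mk_range_eq _ hag.injective]
  exact Matroid.Indep.cardinalMk_le_cRk_of_subset hag.to_subtype_range
    (Set.range_comp_subset_range _ _)

theorem minimal_of_dim_eq_one (h : p.dim = 1) : p.Minimal := by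
  refine ⟨h.ge, fun E K hK _ b hb ↦ or_iff_not_imp_left.2 fun hnalg ↦ ?_⟩
  obtain ⟨j, hj⟩ := not_forall.1 hnalg
  rw [h]
  exact le_antisymm (h ▸ hb.trdegOver_le_dim hK) (one_le_trdegOver ⟨j, rfl⟩ hj)

theorem Minimal.dim_le_one_of_finite_fixed (hmin : p.Minimal) {E : DiffExt k σ}
    {a : Fin p.N → E.carrier} (ha : p.IsRealisation E a) {T : Set E.carrier} (hT : T.Finite)
    (hfix : ∀ c ∈ T, E.sigma c = c) {K : Subfield E.carrier} (hkK : Set.range E.emb ⊆ K)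
    (hσK : K.map E.sigma.toRingHom = K) (hK : trdegOver K (Set.range a) = p.dim)
    (hKT : trdegOver (Subfield.closure (K ∪ T)) (Set.range a) < p.dim) : p.dim ≤ 1 := by
  induction T, hT using Set.Finite.induction_on generalizing K with
  | empty => simp [hK] at hKT
  | @insert c T _ _ ih =>
    set K₁ := Subfield.closure (K ∪ {c})
    have hσK₁ : K₁.map E.sigma.toRingHom = K₁ :=
      Subfield.map_closure_union_eq_self hσK (by simpa using hfix c (Set.mem_insert c T))
    rcases hmin.2 E K₁ (hkK.trans fun x hx ↦ Subfield.subset_closure (Or.inl hx)) hσK₁ a ha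
      with halg | hK₁
    · rw [← hK, ← Cardinal.mk_singleton c]
      exact trdegOver_le_of_isAlgOver (by rintro _ ⟨j, rfl⟩; exact halg j)
    · refine ih (fun x hx ↦ hfix x (Set.mem_insert_of_mem c hx)) ?_ hσK₁ hK₁ ?_
      · exact hkK.trans fun x hx ↦ Subfield.subset_closure (Or.inl hx)
      · rwa [Subfield.closure_closure_union, Set.union_assoc, Set.singleton_union]

theorem Minimal.dim_le_one (hmin : p.Minimal) (h : p.NonorthFixed) : p.dim ≤ 1 := by
  obtain ⟨E, K, a, hkK, hσK, ha, hK, M, c, hc, hKc⟩ := h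
  exact hmin.dim_le_one_of_finite_fixed ha (Set.finite_range c)
    (by rintro _ ⟨i, rfl⟩; exact hc i) hkK hσK hK hKc

end RatType

theorem statement15_general {k : Type u} [Field k]
    (σ : k ≃+* k) (p : RatType k σ)
    (h : p.NonorthFixed) :
    p.Minimal ↔ p.dim = 1 :=
  ⟨fun hmin ↦ le_antisymm (hmin.dim_le_one h) hmin.1, RatType.minimal_of_dim_eq_one⟩

theorem statement15 {k : Type u} [Field k] [IsAlgClosed k] [CharZero k]
    (σ : k ≃+* k) (p : RatType k σ) (hp : 1 ≤ p.dim)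
    (h : p.NonorthFixed) :
    p.Minimal ↔ p.dim = 1 :=
  statement15_general σ p h
end

section
/- Let k be an algebraically closed field of characteristic zero and σ a field automorphism of k. Then the fixed field {x ∈ k : σ(x) = x} is not finitely generated as a field; that is, there is no finite subset S of k such that the fixed field equals the smallest subfield of k containing S. -/
/-!
Suppose the fixed field were generated by a finite set `S`. For a transcendence basis `b` of
`k` over `ℚ` it lies in `ℚ(b)(S)`, a finite extension of `ℚ(b)`; since `ℚ` is algebraically
closed in `ℚ(b)`, the algebraic elements of the fixed field then have bounded degree over `ℚ`.
Take a prime `ℓ` beyond that bound and a primitive `ℓ`-th root of unity `ζ`. If `σ` fixes `ζ`,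
then `ζ` is a fixed element of degree `ℓ - 1`. Otherwise `1` is the only `ℓ`-th root of unity
fixed by `σ`, so `w ↦ w / σ w` permutes the `ℓ`-th roots of unity; this turns any `ℓ`-th root
`α` of `2` into a fixed one `α w`, of degree `ℓ`.
-/

universe u

open Polynomial

theorem AlgebraicIndependent.mem_bot_of_mem_adjoin_of_isAlgebraic {ι F E : Type*} [Field F]
    [Field E] [Algebra F E] {x : ι → E} (hx : AlgebraicIndependent F x) {y : E}
    (hy : y ∈ IntermediateField.adjoin F (Set.range x)) (halg : IsAlgebraic F y) :
    y ∈ (⊥ : IntermediateField F E) := by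
  obtain ⟨p, q, rfl⟩ := (IntermediateField.mem_adjoin_range_iff F x y).mp hy
  by_cases hq : MvPolynomial.aeval x q = 0
  · simp [hq]
  obtain ⟨m, hm⟩ := MvPolynomial.ne_zero_iff.mp (fun h : q = 0 ↦ hq (by simp [h]))
  set A := algebraicClosure F E
  let z : A := ⟨_, mem_algebraicClosure_iff.mpr halg⟩
  -- `x` stays algebraically independent over the algebraic closure of `F`, which contains `y`,
  -- so the relation `y * q(x) = p(x)` holds coefficientwise.
  have key : MvPolynomial.C z * q.map (algebraMap F A) - p.map (algebraMap F A) = 0 :=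
    hx.algebraicClosure.eq_zero_of_aeval_eq_zero _ <| by
      rw [map_sub, map_mul, MvPolynomial.aeval_map_algebraMap, MvPolynomial.aeval_map_algebraMap]
      simp [z, div_mul_cancel₀ _ hq]
  have hcoeff := congrArg (fun r : MvPolynomial ι A ↦ ((r.coeff m : A) : E)) key
  simp only [MvPolynomial.coeff_sub, MvPolynomial.coeff_C_mul, MvPolynomial.coeff_map,
    MvPolynomial.coeff_zero, ZeroMemClass.coe_zero] at hcoeff
  push_cast [z, IntermediateField.algebraMap_apply, sub_eq_zero] at hcoeff
  rw [IntermediateField.mem_bot]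
  refine ⟨MvPolynomial.coeff m p / MvPolynomial.coeff m q, ?_⟩
  rw [map_div₀, ← hcoeff, mul_div_cancel_right₀ _ ((_root_.map_ne_zero _).mpr hm)]

theorem Polynomial.mem_lifts_of_roots_mem_range {K E : Type*} [CommRing K] [Field E]
    [Algebra K E] {p : E[X]} (hp : p.Monic) (hs : p.Splits)
    (h : ∀ r ∈ p.roots, r ∈ Set.range (algebraMap K E)) :
    p ∈ lifts (algebraMap K E) := by
  rw [hs.eq_prod_roots_of_monic hp]
  refine Subsemiring.multiset_prod_mem _ _ fun f hf ↦ ?_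
  obtain ⟨r, hr, rfl⟩ := Multiset.mem_map.mp hf
  obtain ⟨c, rfl⟩ := h r hr
  exact ⟨X - C c, by simp⟩

theorem AlgebraicIndependent.natDegree_minpoly_le_natDegree_minpoly_adjoin {ι F E : Type*}
    [Field F] [Field E] [IsAlgClosed E] [Algebra F E] {b : ι → E} (hb : AlgebraicIndependent F b)
    {x : E} (hx : IsAlgebraic F x) :
    (minpoly F x).natDegree ≤
      (minpoly (IntermediateField.adjoin F (Set.range b)) x).natDegree := by
  set K := IntermediateField.adjoin F (Set.range b)
  have hxK : IsIntegral K x := hx.isIntegral.tower_top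
  set g := (minpoly K x).map (algebraMap K E)
  have hg : g.Monic := (minpoly.monic hxK).map _
  -- The roots of `g` are roots of `minpoly F x`, so its coefficients are algebraic over `F`;
  -- they also lie in `K`, hence in `F`.
  have hroots : ∀ r ∈ g.roots, r ∈ Set.range (algebraMap (algebraicClosure F E) E) := by
    intro r hr
    have hrK : aeval r (minpoly K x) = 0 := (mem_aroots.mp hr).2
    have hrF : aeval r (minpoly F x) = 0 := by
      rw [← aeval_map_algebraMap K]
      exact aeval_eq_zero_of_dvd_aeval_eq_zero (minpoly.dvd_map_of_isScalarTower F K x) hrK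
    exact ⟨⟨r, mem_algebraicClosure_iff.mpr
      ⟨minpoly F x, minpoly.ne_zero hx.isIntegral, hrF⟩⟩, rfl⟩
  have hgA := (lifts_iff_coeff_lifts g).mp
    (mem_lifts_of_roots_mem_range hg (IsAlgClosed.splits g) hroots)
  have hgF : g ∈ lifts (algebraMap F E) := by
    refine (lifts_iff_coeff_lifts g).mpr fun n ↦ ?_
    obtain ⟨a, ha⟩ := hgA n
    refine IntermediateField.mem_bot.mp (hb.mem_bot_of_mem_adjoin_of_isAlgebraic ?_ ?_)
    · rw [coeff_map]; exact ((minpoly K x).coeff n).2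
    · rw [← ha]; exact mem_algebraicClosure_iff.mp a.2
  obtain ⟨q, hqg, hqdeg, hqmonic⟩ := lifts_and_natDegree_eq_and_monic hgF hg
  have hq : minpoly F x ∣ q := minpoly.dvd F x <| by
    rw [aeval_def, eval₂_eq_eval_map, hqg, eval_map, ← aeval_def, minpoly.aeval]
  calc (minpoly F x).natDegree ≤ q.natDegree := natDegree_le_of_dvd hq hqmonic.ne_zero
    _ = (minpoly K x).natDegree := by rw [hqdeg, natDegree_map]

theorem IntermediateField.exists_natDegree_minpoly_le_of_finite {F E : Type*} [Field F]
    [Field E] [IsAlgClosed E] [Algebra F E] {S : Set E} (hS : S.Finite) :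
    ∃ N, ∀ x ∈ adjoin F S, IsAlgebraic F x → (minpoly F x).natDegree ≤ N := by
  obtain ⟨b, hb⟩ := exists_isTranscendenceBasis F E
  set K := adjoin F (Set.range ((↑) : b → E))
  have : Algebra.IsAlgebraic K E := hb.isAlgebraic_field
  have : Finite S := hS.to_subtype
  have : FiniteDimensional K (adjoin K S) :=
    finiteDimensional_adjoin fun z _ ↦ (Algebra.IsAlgebraic.isAlgebraic z).isIntegral
  refine ⟨Module.finrank K (adjoin K S), fun x hx hxalg ↦ ?_⟩
  have hxK : x ∈ adjoin K S :=
    (adjoin_le_iff.mpr (subset_adjoin K S) : adjoin F S ≤ (adjoin K S).restrictScalars F) hx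
  calc (minpoly F x).natDegree ≤ (minpoly K x).natDegree :=
        hb.1.natDegree_minpoly_le_natDegree_minpoly_adjoin hxalg
    _ = (minpoly K (⟨x, hxK⟩ : adjoin K S)).natDegree := by rw [minpoly_eq]
    _ ≤ Module.finrank K (adjoin K S) := minpoly.natDegree_le _

section RootsOfUnity

variable {K : Type*} [Field K] (σ : K ≃+* K) {ℓ : ℕ} (hℓ : ℓ.Prime) {ζ : K}
  (hζ : IsPrimitiveRoot ζ ℓ) (hσζ : σ ζ ≠ ζ)
include hℓ hζ hσζ

theorem eq_one_of_mem_nthRootsFinset_of_map_eq {v : K} (hv : v ∈ nthRootsFinset ℓ (1 : K))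
    (hσv : σ v = v) : v = 1 := by
  by_contra hv1
  have : NeZero ℓ := ⟨hℓ.ne_zero⟩
  obtain ⟨i, -, rfl⟩ :=
    (isPrimitiveRoot_of_mem_nthRootsFinset hℓ hv hv1).eq_pow_of_pow_eq_one hζ.pow_eq_one
  exact hσζ (by rw [map_pow, hσv])

theorem surjOn_div_map_nthRootsFinset :
    Set.SurjOn (fun w ↦ w / σ w) (nthRootsFinset ℓ (1 : K)) (nthRootsFinset ℓ (1 : K)) := by
  have hmem {w : K} : w ∈ nthRootsFinset ℓ (1 : K) ↔ w ^ ℓ = 1 := mem_nthRootsFinset hℓ.pos 1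
  have hne {w : K} (hw : w ∈ nthRootsFinset ℓ (1 : K)) : w ≠ 0 :=
    ne_zero_pow hℓ.ne_zero (by rw [hmem.mp hw]; exact one_ne_zero)
  refine Finset.surjOn_of_injOn_of_card_le _ (fun w hw ↦ ?_) (fun w hw w' hw' h ↦ ?_) le_rfl
  · exact hmem.mpr (by rw [div_pow, ← map_pow, hmem.mp hw, map_one, div_one])
  · have hσ : σ (w / w') = w / w' := by
      rw [map_div₀, div_eq_div_iff (σ.map_ne_zero_iff.mpr (hne hw')) (hne hw')]
      rw [div_eq_div_iff (σ.map_ne_zero_iff.mpr (hne hw)) (σ.map_ne_zero_iff.mpr (hne hw'))] at h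
      linear_combination -h
    have h1 := eq_one_of_mem_nthRootsFinset_of_map_eq σ hℓ hζ hσζ
      (hmem.mpr (by rw [div_pow, hmem.mp hw, hmem.mp hw', div_one])) hσ
    exact (div_eq_one_iff_eq (hne hw')).mp h1

theorem exists_map_eq_self_and_pow_eq [IsAlgClosed K] {x : K} (hx : σ x = x) :
    ∃ y, σ y = y ∧ y ^ ℓ = x := by
  obtain ⟨α, rfl⟩ := IsAlgClosed.exists_pow_nat_eq x hℓ.pos
  obtain rfl | hα := eq_or_ne α 0
  · exact ⟨0, map_zero σ, rfl⟩
  have hu : σ α / α ∈ nthRootsFinset ℓ (1 : K) := by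
    rw [mem_nthRootsFinset hℓ.pos, div_pow, ← map_pow, hx, div_self (pow_ne_zero _ hα)]
  obtain ⟨w, hw, hwu⟩ := surjOn_div_map_nthRootsFinset σ hℓ hζ hσζ hu
  have hw1 : w ^ ℓ = 1 := (mem_nthRootsFinset hℓ.pos 1).mp hw
  have hσw : σ w ≠ 0 := σ.map_ne_zero_iff.mpr (ne_zero_pow hℓ.ne_zero (by simp [hw1]))
  refine ⟨α * w, ?_, by rw [mul_pow, hw1, mul_one]⟩
  simp only at hwu
  rw [div_eq_div_iff hσw hα] at hwu
  rw [map_mul]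
  linear_combination -hwu

end RootsOfUnity

theorem Rat.pow_ne_two {ℓ : ℕ} (hℓ : ℓ ≠ 1) (b : ℚ) : b ^ ℓ ≠ 2 := by
  intro hb
  have hv : padicValRat 2 (b ^ ℓ) = ℓ * padicValRat 2 b := padicValRat.pow b
  rw [hb, show padicValRat 2 2 = 1 from padicValRat.self (p := 2) one_lt_two] at hv
  have := Int.eq_one_of_dvd_one (by positivity) ⟨_, hv⟩
  omega

theorem minpoly_rat_eq_X_pow_sub_two {K : Type*} [Field K] [CharZero K] {ℓ : ℕ} (hℓ : ℓ.Prime)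
    {y : K} (hy : y ^ ℓ = 2) : minpoly ℚ y = X ^ ℓ - C 2 := by
  have hirr : Irreducible (X ^ ℓ - C (2 : ℚ)) :=
    X_pow_sub_C_irreducible_of_prime hℓ (Rat.pow_ne_two hℓ.one_lt.ne')
  refine (minpoly.eq_of_irreducible_of_monic hirr ?_ (monic_X_pow_sub_C _ hℓ.ne_zero)).symm
  simp [hy]

theorem statement18 {k : Type u} [Field k] [IsAlgClosed k] [CharZero k]
    (σ : k ≃+* k) (F : Subfield k) (hF : ∀ x : k, x ∈ F ↔ σ x = x) :
    ¬ ∃ S : Set k, S.Finite ∧ F = Subfield.closure S := by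
  rintro ⟨S, hS, rfl⟩
  obtain ⟨N, hN⟩ := IntermediateField.exists_natDegree_minpoly_le_of_finite (F := ℚ) hS
  have hdeg (x : k) (hx : σ x = x) (halg : IsAlgebraic ℚ x) : (minpoly ℚ x).natDegree ≤ N :=
    hN x (Subfield.closure_le.mpr (IntermediateField.subset_adjoin ℚ S) ((hF x).mpr hx)) halg
  obtain ⟨ℓ, hNℓ, hℓ⟩ := Nat.exists_infinite_primes (N + 2)
  have : NeZero ℓ := ⟨hℓ.ne_zero⟩
  obtain ⟨ζ, hζ⟩ := HasEnoughRootsOfUnity.exists_primitiveRoot k ℓ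
  by_cases hσζ : σ ζ = ζ
  · have hζN := hdeg ζ hσζ ((hζ.isIntegral hℓ.pos).tower_top (A := ℚ)).isAlgebraic
    rw [← cyclotomic_eq_minpoly_rat hζ hℓ.pos, natDegree_cyclotomic, Nat.totient_prime hℓ] at hζN
    omega
  · obtain ⟨y, hσy, hy⟩ := exists_map_eq_self_and_pow_eq σ hℓ hζ hσζ (map_ofNat σ 2)
    have hmin := minpoly_rat_eq_X_pow_sub_two hℓ hy
    have hyN := hdeg y hσy
      (minpoly.ne_zero_iff.mp (hmin ▸ X_pow_sub_C_ne_zero hℓ.pos 2)).isAlgebraic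
    rw [hmin, natDegree_X_pow_sub_C] at hyN
    omega
end

section
/- For every field automorphism σ of the algebraic closure of ℚ, the fixed field {x : σ(x) = x} is an infinite-degree extension of ℚ; that is, the fixed field of σ is never finite-dimensional as a ℚ-vector space. -/
/-!
The automorphism σ sends each square root `√p` to `±√p`, so infinitely many primes share
the same sign; for one such prime `p₀`, every `√(p₀ p)` with `p` of that sign is fixed by σ.
The fields `ℚ(√(p₀ p))` are pairwise distinct, since `p₀ p · p₀ q` is not a square, whereas a
finite extension of `ℚ` has only finitely many intermediate fields.
-/

open Polynomial IntermediateField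

section QuadraticSubfields

variable {K E : Type*} [Field K] [Field E] [Algebra K E]

theorem exists_eq_add_mul_of_mem_adjoin_of_sq_eq {y z : E} {m : K}
    (hy : y ^ 2 = algebraMap K E m) (hz : z ∈ K⟮y⟯) :
    ∃ a b : K, z = algebraMap K E a + algebraMap K E b * y := by
  set q : K[X] := X ^ 2 - C m
  have hq : q.Monic := monic_X_pow_sub_C m two_ne_zero
  have hqy : aeval y q = 0 := by simp [q, hy]
  have hz' : z ∈ Algebra.adjoin K {y} := by
    rwa [← adjoin_simple_toSubalgebra_of_isAlgebraic ⟨q, hq.ne_zero, hqy⟩]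
  rw [Algebra.adjoin_singleton_eq_range_aeval] at hz'
  obtain ⟨p, rfl⟩ := hz'
  have hdeg : (p %ₘ q).natDegree ≤ 1 := by
    have := natDegree_modByMonic_lt p hq (by
      intro h; simpa [q, natDegree_X_pow_sub_C] using congrArg natDegree h)
    rw [natDegree_X_pow_sub_C] at this
    omega
  obtain ⟨b, a, hab⟩ := exists_eq_X_add_C_of_natDegree_le_one hdeg
  refine ⟨a, b, ?_⟩
  rw [AlgHom.toRingHom_eq_coe, RingHom.coe_coe, ← aeval_modByMonic_eq_self_of_root hqy, hab]
  simp [add_comm]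

theorem isSquare_or_isSquare_mul_of_mem_adjoin (h2 : (2 : K) ≠ 0) {y z : E} {m n : K}
    (hy : y ^ 2 = algebraMap K E m) (hz : z ^ 2 = algebraMap K E n) (hm : ¬IsSquare m)
    (hmem : z ∈ K⟮y⟯) : IsSquare n ∨ IsSquare (m * n) := by
  obtain ⟨a, b, rfl⟩ := exists_eq_add_mul_of_mem_adjoin_of_sq_eq hy hmem
  -- `n = a² + b² m + 2ab y` and `y ∉ K`, so `a = 0` or `b = 0`.
  have inj := (algebraMap K E).injective
  have key : algebraMap K E n =
      algebraMap K E (a ^ 2 + b ^ 2 * m) + algebraMap K E (2 * a * b) * y := by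
    rw [← hz]
    simp only [map_add, map_mul, map_pow, map_ofNat]
    linear_combination (algebraMap K E b) ^ 2 * hy
  by_cases ha : a = 0
  · have hn : n = b ^ 2 * m := inj (by simpa [ha] using key)
    exact Or.inr ⟨m * b, by rw [hn]; ring⟩
  by_cases hb : b = 0
  · exact Or.inl ⟨a, inj (by simpa [hb, sq] using key)⟩
  refine absurd ⟨(n - a ^ 2 - b ^ 2 * m) / (2 * a * b), inj ?_⟩ hm
  have h2ab : algebraMap K E (2 * a * b) ≠ 0 := by simp [h2, ha, hb]
  have hyK : y = algebraMap K E ((n - a ^ 2 - b ^ 2 * m) / (2 * a * b)) := by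
    rw [map_div₀, eq_div_iff h2ab, map_sub, map_sub, key, map_add]; ring
  rw [← hy, hyK, sq, map_mul]

theorem finite_of_pairwise_not_isSquare_mul [FiniteDimensional K E] [Algebra.IsSeparable K E]
    {ι : Type*} (h2 : (2 : K) ≠ 0) (m : ι → K) (hm : ∀ i, ¬IsSquare (m i))
    (hmm : Pairwise fun i j ↦ ¬IsSquare (m i * m j)) (y : ι → E)
    (hy : ∀ i, y i ^ 2 = algebraMap K E (m i)) : Finite ι := by
  have : Finite (IntermediateField K E) :=
    Field.finite_intermediateField_of_exists_primitive_element K E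
      (Field.exists_primitive_element K E)
  refine Finite.of_injective (fun i ↦ K⟮y i⟯) fun i j hij ↦ ?_
  by_contra hne
  have hmem : y j ∈ K⟮y i⟯ := by
    rw [show K⟮y i⟯ = K⟮y j⟯ from hij]
    exact mem_adjoin_simple_self K (y j)
  exact (isSquare_or_isSquare_mul_of_mem_adjoin h2 (hy i) (hy j) (hm i) hmem).elim (hm j)
    (hmm hne)

end QuadraticSubfields

theorem map_mul_eq_self_of_sq_eq {R : Type*} [CommRing R] [NoZeroDivisors R] (σ : R →+* R)
    {x y : R} (hx : σ x ^ 2 = x ^ 2) (hy : σ y ^ 2 = y ^ 2) (hxy : σ x = x ↔ σ y = y) :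
    σ (x * y) = x * y := by
  rw [map_mul]
  by_cases hx' : σ x = x
  · rw [hx', hxy.1 hx']
  · rw [(sq_eq_sq_iff_eq_or_eq_neg.1 hx).resolve_left hx',
      (sq_eq_sq_iff_eq_or_eq_neg.1 hy).resolve_left (mt hxy.2 hx'), neg_mul_neg]

theorem Nat.Prime.not_isSquare_mul {p q : ℕ} (hp : p.Prime) (hq : q.Prime) (hpq : p ≠ q) :
    ¬IsSquare (p * q) := by
  rintro ⟨r, hr⟩
  have hsf : Squarefree (p * q) :=
    Nat.squarefree_mul_iff.2
      ⟨(Nat.coprime_primes hp hq).2 hpq, hp.prime.squarefree, hq.prime.squarefree⟩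
  have hr1 : r = 1 := Nat.isUnit_iff.1 (hsf r ⟨1, by rw [hr, mul_one]⟩)
  rw [hr1, mul_one] at hr
  exact hp.ne_one (Nat.eq_one_of_mul_eq_one_right hr)

theorem not_isSquare_mul_self_mul {α : Type*} [CommGroupWithZero α] {c x : α} (hc : c ≠ 0)
    (hx : ¬IsSquare x) : ¬IsSquare (c * c * x) := fun h ↦
  hx (by simpa [hc] using h.div (IsSquare.mul_self c))

theorem statement19 (σ : AlgebraicClosure ℚ ≃+* AlgebraicClosure ℚ)
    (F : Subfield (AlgebraicClosure ℚ)) (hF : ∀ x, x ∈ F ↔ σ x = x) :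
    ¬ FiniteDimensional ℚ F := by
  intro hfd
  choose s hs using fun n : ℕ ↦ IsAlgClosed.exists_pow_nat_eq (n : AlgebraicClosure ℚ) two_pos
  have hσs (n : ℕ) : σ (s n) ^ 2 = s n ^ 2 := by rw [← map_pow, hs, map_natCast]
  obtain ⟨ε, hε⟩ : ∃ ε : Prop, {p : ℕ | p.Prime ∧ (σ (s p) = s p ↔ ε)}.Infinite := by
    by_contra! h
    refine Nat.infinite_setOfPred_prime
      (((h True).union (h False)).subset fun p (hp : p.Prime) ↦ ?_)
    by_cases hp' : σ (s p) = s p <;> simp [hp, hp']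
  obtain ⟨p₀, hp₀, hp₀ε⟩ := hε.nonempty
  set P := {p : ℕ | p.Prime ∧ (σ (s p) = s p ↔ ε)} \ {p₀}
  have : Infinite P := (hε.sdiff (Set.finite_singleton p₀)).to_subtype
  have hfix (p : P) : s p₀ * s p ∈ F :=
    (hF _).2 (map_mul_eq_self_of_sq_eq σ.toRingHom (hσs _) (hσs _) (hp₀ε.trans p.2.1.2.symm))
  have : Finite P := finite_of_pairwise_not_isSquare_mul (E := F) two_ne_zero
    (fun p ↦ (p₀ * p : ℚ)) (fun p ↦ ?_) (fun p q hpq ↦ ?_) (fun p ↦ ⟨_, hfix p⟩) fun p ↦ ?_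
  · exact not_finite P
  · exact_mod_cast mt Rat.isSquare_natCast_iff.1 (hp₀.not_isSquare_mul p.2.1.1 fun h ↦ p.2.2 h.symm)
  · change ¬IsSquare ((p₀ * p : ℚ) * (p₀ * q))
    rw [show (p₀ * p : ℚ) * (p₀ * q) = p₀ * p₀ * (p * q) by ring]
    refine not_isSquare_mul_self_mul (Nat.cast_ne_zero.2 hp₀.ne_zero) ?_
    exact_mod_cast mt Rat.isSquare_natCast_iff.1
      (p.2.1.1.not_isSquare_mul q.2.1.1 fun h ↦ hpq (Subtype.ext h))
  · ext
    simp [mul_pow, hs]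
end
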